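/- (Fetching lemma.) Let k ≥ 1 and let φ be a Boolean function on V = {0,...,k} such that #φ ≠ |eul(φ)|. Then there exist satisfying valuations ν, ν' of φ with (−1)^{|ν|} ≠ (−1)^{|ν'|} and a simple path ν = ν_0 − ν_1 − ... − ν_n − ν_{n+1} = ν' from ν to ν' in the hypercube graph G_V (hence with n even) such that ν_i ∉ sat(φ) for all 1 ≤ i ≤ n. -/

import Mathlib

open scoped Classical

/-!
Since `#φ ≠ |eul φ|`, not all satisfying valuations have the same parity, and the hypercube is
connected, so some path joins two satisfying valuations of opposite parity. Take a shortest such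
path. A satisfying valuation in its interior has opposite parity to one of the two endpoints, so
it would cut off a strictly shorter path of the same kind.
-/

/-- Flip the membership of variable `l` in valuation `ν`. -/
def flipV {k : ℕ} (ν : Finset (Fin (k + 1))) (l : Fin (k + 1)) : Finset (Fin (k + 1)) :=
  if l ∈ ν then ν.erase l else insert l ν

lemma flipV_flipV {k : ℕ} (ν : Finset (Fin (k + 1))) (l : Fin (k + 1)) :
    flipV (flipV ν l) l = ν := by
  unfold flipV
  by_cases h : l ∈ ν
  · simp [h, Finset.insert_erase h]
  · simp [h, Finset.erase_insert h]

lemma flipV_ne {k : ℕ} (ν : Finset (Fin (k + 1))) (l : Fin (k + 1)) :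
    flipV ν l ≠ ν := by
  unfold flipV
  by_cases h : l ∈ ν
  · simp only [h, if_true]
    intro he
    exact (Finset.notMem_erase l ν) (he.symm ▸ h)
  · simp only [h, if_false]
    intro he
    exact h (he ▸ Finset.mem_insert_self l ν)

/-- The set of satisfying valuations of a Boolean function on `V = {0,...,k}`. -/
def satSet {k : ℕ} (φ : Finset (Fin (k + 1)) → Bool) : Finset (Finset (Fin (k + 1))) :=
  Finset.univ.filter (fun ν => φ ν = true)

/-- The Euler characteristic of a Boolean function: `Σ_{ν ⊨ φ} (-1)^{|ν|}`. -/
def eul {k : ℕ} (φ : Finset (Fin (k + 1)) → Bool) : ℤ :=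
  ∑ ν ∈ satSet φ, (-1 : ℤ) ^ ν.card

/-- The hypercube graph `G_V` on the valuations of `V = {0,...,k}`: there is an edge
between `ν` and `ν^(l)` for every valuation `ν` and variable `l`. -/
def hypercube (k : ℕ) : SimpleGraph (Finset (Fin (k + 1))) where
  Adj ν μ := ∃ l, μ = flipV ν l
  symm := by
    constructor
    rintro ν μ ⟨l, rfl⟩
    exact ⟨l, (flipV_flipV ν l).symm⟩
  loopless := by
    constructor
    rintro ν ⟨l, h⟩
    exact flipV_ne ν l h.symm

namespace SimpleGraph

variable {V α : Type*} {G : SimpleGraph V}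

theorem Walk.exists_isPath_avoiding_of_apply_ne {S : V → Prop} {f : V → α} {a b : V}
    (p : G.Walk a b) (hp : p.IsPath) (ha : S a) (hb : S b) (hab : f a ≠ f b) :
    ∃ u v, S u ∧ S v ∧ f u ≠ f v ∧
      ∃ q : G.Walk u v, q.IsPath ∧ ∀ w ∈ q.support, w ≠ u → w ≠ v → ¬ S w := by
  induction hn : p.length using Nat.strong_induction_on generalizing a b with
  | _ n ih =>
  by_cases hint : ∀ w ∈ p.support, w ≠ a → w ≠ b → ¬ S w
  · exact ⟨a, b, ha, hb, hab, p, hp, hint⟩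
  push Not at hint
  obtain ⟨w, hw, hwa, hwb, hSw⟩ := hint
  have hlen : (p.takeUntil w hw).length + (p.dropUntil w hw).length = n := by
    rw [← hn, ← Walk.length_append, p.take_spec hw]
  have htake : (p.takeUntil w hw).length ≠ 0 := fun h0 =>
    hwa ((p.takeUntil w hw).eq_of_length_eq_zero h0).symm
  have hdrop : (p.dropUntil w hw).length ≠ 0 := fun h0 =>
    hwb ((p.dropUntil w hw).eq_of_length_eq_zero h0)
  by_cases hfw : f a = f w
  · exact ih _ (by omega) (p.dropUntil w hw) (hp.dropUntil hw) hSw hb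
      (fun h => hab (hfw.trans h)) rfl
  · exact ih _ (by omega) (p.takeUntil w hw) (hp.takeUntil hw) ha hSw hfw rfl

theorem Reachable.exists_isPath_avoiding_of_apply_ne {S : V → Prop} {f : V → α} {a b : V}
    (hr : G.Reachable a b) (ha : S a) (hb : S b) (hab : f a ≠ f b) :
    ∃ u v, S u ∧ S v ∧ f u ≠ f v ∧
      ∃ q : G.Walk u v, q.IsPath ∧ ∀ w ∈ q.support, w ≠ u → w ≠ v → ¬ S w :=
  let ⟨p⟩ := hr
  p.bypass.exists_isPath_avoiding_of_apply_ne p.bypass_isPath ha hb hab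

end SimpleGraph

section Hypercube

variable {k : ℕ}

theorem hypercube_reachable_empty (ν : Finset (Fin (k + 1))) : (hypercube k).Reachable ∅ ν := by
  induction ν using Finset.induction_on with
  | empty => rfl
  | insert l s hl ih => exact ih.trans (SimpleGraph.Adj.reachable ⟨l, by simp [flipV, hl]⟩)

theorem hypercube_preconnected : (hypercube k).Preconnected := fun a b =>
  (hypercube_reachable_empty a).symm.trans (hypercube_reachable_empty b)

theorem exists_neg_one_pow_card_ne_of_card_satSet_ne_natAbs_eul {φ : Finset (Fin (k + 1)) → Bool}
    (h : (satSet φ).card ≠ (eul φ).natAbs) :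
    ∃ a b, φ a = true ∧ φ b = true ∧ (-1 : ℤ) ^ a.card ≠ (-1 : ℤ) ^ b.card := by
  contrapose! h
  rcases (satSet φ).eq_empty_or_nonempty with he | ⟨a, ha⟩
  · simp [he, eul]
  have ha : φ a = true := by simpa [satSet] using ha
  have heul : eul φ = (satSet φ).card * (-1 : ℤ) ^ a.card := by
    rw [eul, Finset.sum_congr rfl fun b hb => h b a (by simpa [satSet] using hb) ha,
      Finset.sum_const, nsmul_eq_mul]
  simp [heul, Int.natAbs_mul, Int.natAbs_pow]

end Hypercube

theorem stmt9_general (k : ℕ) (φ : Finset (Fin (k + 1)) → Bool)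
    (h : (satSet φ).card ≠ (eul φ).natAbs) :
    ∃ ν ν' : Finset (Fin (k + 1)), φ ν = true ∧ φ ν' = true ∧
      ((-1 : ℤ) ^ ν.card ≠ (-1 : ℤ) ^ ν'.card) ∧
      ∃ p : (hypercube k).Walk ν ν', p.IsPath ∧
        ∀ μ ∈ p.support, μ ≠ ν → μ ≠ ν' → φ μ = false := by
  obtain ⟨a, b, ha, hb, hab⟩ := exists_neg_one_pow_card_ne_of_card_satSet_ne_natAbs_eul h
  obtain ⟨ν, ν', hν, hν', hne, p, hp, hint⟩ :=
    (hypercube_preconnected a b).exists_isPath_avoiding_of_apply_ne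
      (S := fun μ => φ μ = true) (f := fun μ => (-1 : ℤ) ^ μ.card) ha hb hab
  exact ⟨ν, ν', hν, hν', hne, p, hp, fun μ hμ h₁ h₂ => by simpa using hint μ hμ h₁ h₂⟩

/-- Fetching lemma: if `#φ ≠ |eul(φ)|` then there are satisfying valuations
`ν, ν'` of `φ` with `(-1)^{|ν|} ≠ (-1)^{|ν'|}` and a simple path from `ν` to `ν'` in `G_V`
whose internal vertices do not satisfy `φ`. -/
theorem stmt9 (k : ℕ) (hk : 1 ≤ k) (φ : Finset (Fin (k + 1)) → Bool)
    (h : (satSet φ).card ≠ (eul φ).natAbs) :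
    ∃ ν ν' : Finset (Fin (k + 1)), φ ν = true ∧ φ ν' = true ∧
      ((-1 : ℤ) ^ ν.card ≠ (-1 : ℤ) ^ ν'.card) ∧
      ∃ p : (hypercube k).Walk ν ν', p.IsPath ∧
        ∀ μ ∈ p.support, μ ≠ ν → μ ≠ ν' → φ μ = false :=
  stmt9_general k φ h
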